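/- arXiv:2011.12579 — 4 statements merged into one kernel-verified Lean document; each statement's English description precedes it below -/
import Mathlib

section
/- Let λ > 0. There exists a constant C = C(λ) > 0 such that for all x ∈ ℝ³∖{0} the steady-state vorticity fundamental solution Φ₀ satisfies |∇Φ₀(x)| ≤ C (|x|^{−2} + |x|^{−3/2} s(λx)^{1/2}) e^{−s(λx)/2}. -/
/-!
Write `w(x) := s(λx) = |λ|‖x‖ + λx₁`, so that `Φ₀ = (4π)⁻¹ ‖x‖⁻¹ e^{-w/2}`. The product rule gives
`|∇Φ₀| ≤ (4π)⁻¹ e^{-w/2} (‖x‖⁻² + ‖x‖⁻¹ |∇w| / 2)`, and `∇w = |λ| x/‖x‖ + λe₁` satisfies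
`|∇w|² = 2|λ| w / ‖x‖`; this identity produces the term `‖x‖^{-3/2} s(λx)^{1/2}`.
-/

open MeasureTheory Real Set

noncomputable section

/-- Three-dimensional Euclidean space. -/
abbrev E3 : Type := EuclideanSpace ℝ (Fin 3)

/-- The wake function `s(x) = |x| + x₁`. -/
def wake (x : E3) : ℝ := ‖x‖ + x 0

/-- The `j`-th standard basis vector of `ℝ³`. -/
def e3 (j : Fin 3) : E3 := EuclideanSpace.single j 1

/-- Euclidean norm of a triple of reals. -/
def vnorm (v : Fin 3 → ℝ) : ℝ := Real.sqrt (∑ i, v i ^ 2)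

/-- The steady-state vorticity fundamental solution of the Oseen system:
`Φ₀(x) = (4π|x|)⁻¹ e^{−s(λx)/2}`. -/
def Phi0 (lam : ℝ) (x : E3) : ℝ :=
  (4 * Real.pi * ‖x‖)⁻¹ * Real.exp (-(wake (lam • x)) / 2)

section InnerProductSpace

variable {F : Type*} [NormedAddCommGroup F] [InnerProductSpace ℝ F] {x : F}

theorem hasFDerivAt_norm_of_ne_zero (hx : x ≠ 0) : HasFDerivAt (‖·‖) (innerSL ℝ (‖x‖⁻¹ • x)) x := by
  have h := (hasStrictFDerivAt_norm_sq x).hasFDerivAt.sqrt (pow_ne_zero 2 (norm_ne_zero_iff.mpr hx))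
  simp only [Real.sqrt_sq (norm_nonneg _)] at h
  refine h.congr_fderiv ?_
  ext v
  simp only [map_smul, smul_apply, coe_innerSL_apply, nsmul_eq_mul, Nat.cast_ofNat, smul_eq_mul]
  field_simp

theorem hasFDerivAt_norm_inv (hx : x ≠ 0) :
    HasFDerivAt (fun y : F => ‖y‖⁻¹) (-(‖x‖ ^ 2)⁻¹ • innerSL ℝ (‖x‖⁻¹ • x)) x :=
  (hasDerivAt_inv (norm_ne_zero_iff.mpr hx)).comp_hasFDerivAt x (hasFDerivAt_norm_of_ne_zero hx)

end InnerProductSpace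

theorem wake_nonneg (x : E3) : 0 ≤ wake x := by
  have h : |x 0| ≤ ‖x‖ := by simpa using PiLp.norm_apply_le x 0
  unfold wake
  linarith [neg_abs_le (x 0)]

theorem wake_smul (lam : ℝ) (y : E3) :
    wake (lam • y) = |lam| * ‖y‖ + inner ℝ (lam • e3 0) y := by
  simp [wake, e3, norm_smul, real_inner_smul_left, EuclideanSpace.inner_single_left]

theorem hasFDerivAt_wake_smul (lam : ℝ) {x : E3} (hx : x ≠ 0) :
    HasFDerivAt (fun y => wake (lam • y)) (innerSL ℝ (|lam| • ‖x‖⁻¹ • x + lam • e3 0)) x := by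
  simp only [wake_smul]
  refine (((hasFDerivAt_norm_of_ne_zero hx).const_mul |lam|).add
    (innerSL ℝ (lam • e3 0)).hasFDerivAt).congr_fderiv ?_
  ext v
  simp

theorem norm_sq_grad_wake_smul (lam : ℝ) {x : E3} (hx : x ≠ 0) :
    ‖|lam| • ‖x‖⁻¹ • x + lam • e3 0‖ ^ 2 = 2 * |lam| * wake (lam • x) / ‖x‖ := by
  have hr : ‖x‖ ≠ 0 := norm_ne_zero_iff.mpr hx
  have hu : ‖‖x‖⁻¹ • x‖ = 1 := by rw [norm_smul, norm_inv, norm_norm, inv_mul_cancel₀ hr]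
  have he : ‖e3 0‖ = 1 := by simp [e3]
  have hue : inner ℝ (‖x‖⁻¹ • x) (e3 0) = ‖x‖⁻¹ * x 0 := by
    simp [e3, EuclideanSpace.inner_single_right]
  rw [norm_add_sq_real, norm_smul |lam|, norm_smul lam, hu, he,
    real_inner_smul_left, real_inner_smul_right, hue, wake, norm_smul lam x]
  simp only [norm_eq_abs, abs_abs, PiLp.smul_apply, smul_eq_mul]
  field_simp
  ring

theorem norm_fderiv_Phi0_le (lam : ℝ) {x : E3} (hx : x ≠ 0) :
    ‖fderiv ℝ (Phi0 lam) x‖ ≤ (4 * π)⁻¹ *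
      ((‖x‖ ^ 2)⁻¹ + ‖x‖⁻¹ * (√(2 * |lam| * wake (lam • x) / ‖x‖) / 2)) *
        exp (-wake (lam • x) / 2) := by
  have hr : 0 < ‖x‖ := norm_pos_iff.mpr hx
  have hPhi0 : Phi0 lam = fun y => (4 * π)⁻¹ * (‖y‖⁻¹ * exp (-wake (lam • y) / 2)) := by
    funext y
    rw [Phi0, mul_inv, mul_assoc]
  have hexp : HasDerivAt (fun t => exp (-t / 2)) (exp (-wake (lam • x) / 2) * (-1 / 2))
      (wake (lam • x)) := ((hasDerivAt_neg _).div_const 2).exp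
  have hD := hPhi0 ▸ ((hasFDerivAt_norm_inv hx).mul
    (hexp.comp_hasFDerivAt x (hasFDerivAt_wake_smul lam hx))).const_mul (4 * π)⁻¹
  rw [hD.fderiv, norm_smul, norm_inv, Real.norm_of_nonneg (by positivity), mul_assoc]
  gcongr
  refine (norm_add_le _ _).trans_eq ?_
  simp only [norm_smul, norm_mul, norm_neg, norm_div, norm_inv, norm_pow, norm_one,
    innerSL_apply_norm, Function.comp_apply, norm_eq_abs, abs_norm, abs_two, abs_exp]
  rw [← sqrt_sq (norm_nonneg (_ + _)), norm_sq_grad_wake_smul lam hx]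
  field_simp
  ring

theorem inv_mul_sqrt_div_eq {r a : ℝ} (hr : 0 < r) (ha : 0 ≤ a) (S : ℝ) :
    r⁻¹ * (√(2 * a * S / r) / 2) = √(a / 2) * (r ^ (-(3 / 2 : ℝ)) * S ^ ((1 : ℝ) / 2)) := by
  have hr32 : r ^ (-(3 / 2 : ℝ)) = (r * √r)⁻¹ := by
    rw [rpow_neg hr.le, show (3 / 2 : ℝ) = 1 + 1 / 2 by norm_num, rpow_add hr, rpow_one,
      ← sqrt_eq_rpow]
  have h2a : √(2 * a) = 2 * √(a / 2) := by
    rw [show 2 * a = 2 ^ 2 * (a / 2) by ring, sqrt_mul (by positivity), sqrt_sq zero_le_two]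
  rw [hr32, ← sqrt_eq_rpow, sqrt_div' _ hr.le, sqrt_mul (by positivity) S, h2a]
  field_simp

theorem grad_Phi0_pointwise_estimate_general (lam : ℝ) :
    ∃ C > 0, ∀ x : E3, x ≠ 0 →
      ‖fderiv ℝ (Phi0 lam) x‖ ≤
        C * (‖x‖ ^ (-(2 : ℝ)) + ‖x‖ ^ (-(3/2 : ℝ)) * (wake (lam • x)) ^ ((1:ℝ)/2))
          * Real.exp (-(wake (lam • x)) / 2) := by
  refine ⟨(1 + √(|lam| / 2)) / (4 * π), by positivity, fun x hx => ?_⟩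
  have hB : 0 ≤ ‖x‖ ^ (-(3/2 : ℝ)) * wake (lam • x) ^ ((1:ℝ)/2) :=
    mul_nonneg (by positivity) (rpow_nonneg (wake_nonneg _) _)
  calc ‖fderiv ℝ (Phi0 lam) x‖
      ≤ (4 * π)⁻¹ * ((‖x‖ ^ 2)⁻¹ + √(|lam| / 2) *
          (‖x‖ ^ (-(3/2 : ℝ)) * wake (lam • x) ^ ((1:ℝ)/2))) * exp (-wake (lam • x) / 2) := by
        rw [← inv_mul_sqrt_div_eq (norm_pos_iff.mpr hx) (abs_nonneg lam)]
        exact norm_fderiv_Phi0_le lam hx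
    _ ≤ (4 * π)⁻¹ * ((1 + √(|lam| / 2)) * ((‖x‖ ^ 2)⁻¹ +
          ‖x‖ ^ (-(3/2 : ℝ)) * wake (lam • x) ^ ((1:ℝ)/2))) * exp (-wake (lam • x) / 2) := by
        gcongr
        nlinarith [sqrt_nonneg (|lam| / 2), inv_nonneg.mpr (sq_nonneg ‖x‖)]
    _ = _ := by
        rw [rpow_neg (norm_nonneg x) 2, rpow_two]
        ring

/-- **Pointwise estimate of `∇Φ₀`:** for `λ > 0` there is `C = C(λ) > 0` with
`|∇Φ₀(x)| ≤ C(|x|⁻² + |x|^(−3/2) s(λx)^(1/2)) e^(−s(λx)/2)` for all `x ≠ 0`. -/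
theorem grad_Phi0_pointwise_estimate (lam : ℝ) (hlam : 0 < lam) :
    ∃ C > 0, ∀ x : E3, x ≠ 0 →
      ‖fderiv ℝ (Phi0 lam) x‖ ≤
        C * (‖x‖ ^ (-(2 : ℝ)) + ‖x‖ ^ (-(3/2 : ℝ)) * (wake (lam • x)) ^ ((1:ℝ)/2))
          * Real.exp (-(wake (lam • x)) / 2) :=
  grad_Phi0_pointwise_estimate_general lam

end
end

section
/- Let λ > 0 and define Ψ(x) := ∫₀^{s(λx)/2} (1 − e^{−τ})/τ dτ for x ∈ ℝ³. Then for all x ∈ ℝ³∖{0} one has Δ[(4πλ)⁻¹ Ψ](x) = (4π|x|)⁻¹ e^{−s(λx)/2}, i.e. the Laplacian of the Oseen potential (4πλ)⁻¹Ψ equals the steady-state vorticity fundamental solution Φ₀. -/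
open MeasureTheory Real Set

noncomputable section

/-- The Oseen potential `Ψ(x) = ∫₀^{s(λx)/2} (1 − e^{−τ})/τ dτ`. -/
def Psi (lam : ℝ) (x : E3) : ℝ :=
  ∫ τ in (0:ℝ)..(wake (lam • x) / 2), (1 - Real.exp (-τ)) / τ

/-- The Laplacian on `ℝ³`, as the sum of the repeated directional derivatives. -/
def laplacian3 (g : E3 → ℝ) (x : E3) : ℝ :=
  ∑ j : Fin 3, fderiv ℝ (fun y => fderiv ℝ g y (e3 j)) x (e3 j)

/-!
Write `Ψ(x) = G(λ s(x) / 2)` with `G(t) = ∫₀ᵗ k` and `k = dslope (1 - e^{-·}) 0`, the smooth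
extension of `(1 - e^{-τ})/τ` through `τ = 0` (needed: `s` vanishes on the negative `x₁`-axis).
The chain rule `Δ(φ ∘ S) = φ''(S) |∇S|² + φ'(S) ΔS` together with `|∇s|² = 2 s / |x|` and
`Δs = 2 / |x|` gives `ΔΨ(x) = (λ / |x|) (k(t) + t k'(t))` at `t = λ s(x) / 2`, and
`k(t) + t k'(t) = (t k(t))' = e^{-t}`.
-/

open Filter Topology

section DSlope

variable {𝕜 E : Type*} [NontriviallyNormedField 𝕜] [NormedAddCommGroup E] [NormedSpace 𝕜 E]
  {f : 𝕜 → E} {a b : 𝕜} {d f' : E}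

theorem differentiable_dslope (hf : Differentiable 𝕜 f) (ha : AnalyticAt 𝕜 f a) :
    Differentiable 𝕜 (dslope f a) := by
  intro b
  rcases eq_or_ne b a with rfl | hb
  · obtain ⟨p, hp⟩ := ha
    exact hp.has_fpower_series_dslope_fslope.differentiableAt
  · exact (differentiableAt_dslope_of_ne hb).2 (hf b)

theorem HasDerivAt.dslope_add_sub_smul (hf : HasDerivAt f f' b)
    (hd : HasDerivAt (dslope f a) d b) : dslope f a b + (b - a) • d = f' := by
  have h := ((hasDerivAt_id b).sub_const a).smul hd
  simp only [id, one_smul, add_comm (_ • d)] at h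
  refine h.unique ?_
  have : ((fun x => x - a) • dslope f a) = fun x => f x - f a := funext (sub_smul_dslope f a)
  simpa only [this] using hf.sub_const (f a)

end DSlope

theorem intervalIntegral_dslope_eq_slope {E : Type*} [NormedAddCommGroup E] [NormedSpace ℝ E]
    (f : ℝ → E) (c a b : ℝ) :
    ∫ x in a..b, dslope f c x = ∫ x in a..b, slope f c x := by
  refine intervalIntegral.integral_congr_ae ?_
  filter_upwards [measure_singleton c |> measure_eq_zero_iff_ae_notMem.1] with x hx _
  exact eqOn_dslope_slope f c hx

theorem hasFDerivAt_norm {F : Type*} [NormedAddCommGroup F] [InnerProductSpace ℝ F] {x : F}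
    (hx : x ≠ 0) : HasFDerivAt (‖·‖) (‖x‖⁻¹ • innerSL ℝ x) x := by
  have h := (hasStrictFDerivAt_norm_sq x).hasFDerivAt.sqrt (by positivity)
  simp only [sqrt_sq (norm_nonneg _)] at h
  convert h using 1
  match_scalars
  field_simp

theorem e3_apply (j i : Fin 3) : e3 j i = if j = i then 1 else 0 := by
  simp [e3, eq_comm]

theorem innerSL_apply_e3 (x : E3) (j : Fin 3) : innerSL ℝ x (e3 j) = x j := by
  simp [e3, EuclideanSpace.inner_single_right]

theorem laplacian3_comp {φ φ' : ℝ → ℝ} {φ'' : ℝ} {S : E3 → ℝ} {x : E3}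
    (hφ : ∀ t, HasDerivAt φ (φ' t) t) (hφ' : HasDerivAt φ' φ'' (S x))
    (hS : ∀ᶠ y in 𝓝 x, DifferentiableAt ℝ S y)
    (hS' : ∀ j, DifferentiableAt ℝ (fun y => fderiv ℝ S y (e3 j)) x) :
    laplacian3 (fun y => φ (S y)) x =
      φ'' * ∑ j, (fderiv ℝ S x (e3 j)) ^ 2 + φ' (S x) * laplacian3 S x := by
  simp only [laplacian3, Finset.mul_sum, ← Finset.sum_add_distrib]
  refine Finset.sum_congr rfl fun j _ => ?_
  have hchain : (fun y => fderiv ℝ (fun y => φ (S y)) y (e3 j)) =ᶠ[𝓝 x]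
      fun y => φ' (S y) * fderiv ℝ S y (e3 j) := by
    filter_upwards [hS] with y hy
    have h : HasFDerivAt (fun y => φ (S y)) (φ' (S y) • fderiv ℝ S y) y :=
      (hφ (S y)).comp_hasFDerivAt y hy.hasFDerivAt
    rw [h.fderiv, smul_apply, smul_eq_mul]
  have hprod : HasFDerivAt (fun y => φ' (S y) * fderiv ℝ S y (e3 j))
      (φ' (S x) • fderiv ℝ (fun y => fderiv ℝ S y (e3 j)) x +
        fderiv ℝ S x (e3 j) • φ'' • fderiv ℝ S x) x :=
    (hφ'.comp_hasFDerivAt x hS.self_of_nhds.hasFDerivAt).mul (hS' j).hasFDerivAt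
  rw [hchain.fderiv_eq, hprod.fderiv]
  simp only [add_apply, smul_apply, smul_eq_mul]
  ring

theorem sq_add_sq_add_sq_eq_norm_sq (x : E3) : x 0 ^ 2 + x 1 ^ 2 + x 2 ^ 2 = ‖x‖ ^ 2 := by
  simp [EuclideanSpace.real_norm_sq_eq, Fin.sum_univ_three]

theorem wake_smul_of_nonneg {c : ℝ} (hc : 0 ≤ c) (y : E3) : wake (c • y) = c * wake y := by
  simp only [wake, norm_smul, norm_of_nonneg hc, PiLp.smul_apply, smul_eq_mul]
  ring

theorem hasFDerivAt_wake {x : E3} (hx : x ≠ 0) :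
    HasFDerivAt wake (‖x‖⁻¹ • innerSL ℝ x + EuclideanSpace.proj 0) x := by
  have h := (hasFDerivAt_norm hx).add (EuclideanSpace.proj (0 : Fin 3)).hasFDerivAt
  exact h

theorem fderiv_wake_apply {y : E3} (hy : y ≠ 0) (j : Fin 3) :
    fderiv ℝ wake y (e3 j) = y j / ‖y‖ + if j = 0 then 1 else 0 := by
  simp [(hasFDerivAt_wake hy).fderiv, innerSL_apply_e3, e3_apply, div_eq_inv_mul]

theorem hasFDerivAt_fderiv_wake_apply {x : E3} (hx : x ≠ 0) (j : Fin 3) :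
    HasFDerivAt (fun y => fderiv ℝ wake y (e3 j))
      (‖x‖⁻¹ • EuclideanSpace.proj j - (x j / ‖x‖ ^ 3) • innerSL ℝ x) x := by
  have hinv := (hasDerivAt_inv (norm_ne_zero_iff.2 hx)).comp_hasFDerivAt x (hasFDerivAt_norm hx)
  have h := (((EuclideanSpace.proj j).hasFDerivAt (x := x)).mul hinv).add_const
    (if j = 0 then (1 : ℝ) else 0)
  refine (h.congr_of_eventuallyEq ?_).congr_fderiv ?_
  · filter_upwards [eventually_ne_nhds hx] with y hy
    simp [fderiv_wake_apply hy, div_eq_mul_inv]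
  · ext v
    simp only [PiLp.proj_apply, neg_smul, smul_neg, Function.comp_apply, add_apply, neg_apply,
      smul_apply, coe_innerSL_apply, smul_eq_mul, sub_apply]
    field_simp
    ring

theorem sum_sq_fderiv_wake_apply {x : E3} (hx : x ≠ 0) :
    ∑ j, (fderiv ℝ wake x (e3 j)) ^ 2 = 2 * wake x / ‖x‖ := by
  have hr : ‖x‖ ≠ 0 := norm_ne_zero_iff.2 hx
  simp only [fderiv_wake_apply hx, Fin.sum_univ_three, wake]
  simp only [↓reduceIte, one_ne_zero, add_zero, Fin.reduceEq]
  field_simp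
  linear_combination sq_add_sq_add_sq_eq_norm_sq x

theorem laplacian3_wake {x : E3} (hx : x ≠ 0) : laplacian3 wake x = 2 / ‖x‖ := by
  have hr : ‖x‖ ≠ 0 := norm_ne_zero_iff.2 hx
  simp only [laplacian3, (hasFDerivAt_fderiv_wake_apply hx _).fderiv, Fin.sum_univ_three]
  simp only [sub_apply, smul_apply, PiLp.proj_apply, e3_apply, ↓reduceIte, smul_eq_mul, mul_one,
    innerSL_apply_e3]
  field_simp
  linear_combination -sq_add_sq_add_sq_eq_norm_sq x

def oseenIntegrand : ℝ → ℝ := dslope (fun τ => 1 - exp (-τ)) 0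

theorem differentiable_oseenIntegrand : Differentiable ℝ oseenIntegrand :=
  differentiable_dslope (by fun_prop) (analyticAt_const.sub (analyticAt_rexp.comp analyticAt_id.neg))

theorem oseenIntegrand_add_mul_deriv (t : ℝ) :
    oseenIntegrand t + t * deriv oseenIntegrand t = exp (-t) := by
  have h := (((hasDerivAt_neg t).exp).const_sub 1).dslope_add_sub_smul
    (differentiable_oseenIntegrand t).hasDerivAt
  simpa [oseenIntegrand] using h

theorem Psi_eq_integral_oseenIntegrand {lam : ℝ} (hlam : 0 ≤ lam) (y : E3) :
    Psi lam y = ∫ τ in (0 : ℝ)..lam / 2 * wake y, oseenIntegrand τ := by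
  have hwake : wake (lam • y) / 2 = lam / 2 * wake y := by
    rw [wake_smul_of_nonneg hlam]
    ring
  simp only [Psi, hwake, oseenIntegrand, intervalIntegral_dslope_eq_slope, slope_def_field]
  simp

theorem hasDerivAt_integral_oseenIntegrand (t : ℝ) :
    HasDerivAt (fun t => ∫ τ in (0 : ℝ)..t, oseenIntegrand τ) (oseenIntegrand t) t :=
  (differentiable_oseenIntegrand.continuous.integral_hasStrictDerivAt 0 t).hasDerivAt

/-- **The Laplacian of the Oseen potential `(4πλ)⁻¹Ψ` equals `Φ₀`** on `ℝ³∖{0}`. -/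
theorem laplacian_oseen_potential_eq_Phi0 (lam : ℝ) (hlam : 0 < lam) :
    ∀ x : E3, x ≠ 0 →
      laplacian3 (fun y => (4 * Real.pi * lam)⁻¹ * Psi lam y) x = Phi0 lam x := by
  intro x hx
  set c := (4 * π * lam)⁻¹
  set k := lam / 2
  set F := fun t => ∫ τ in (0 : ℝ)..t, oseenIntegrand τ
  have hpot : (fun y => c * Psi lam y) = fun y => c * F (k * wake y) :=
    funext fun y => by rw [Psi_eq_integral_oseenIntegrand hlam.le]
  have hk (t : ℝ) : HasDerivAt (fun t => k * t) k t := by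
    simpa using (hasDerivAt_id t).const_mul k
  have hφ (t : ℝ) : HasDerivAt (fun t => c * F (k * t)) (c * (oseenIntegrand (k * t) * k)) t :=
    ((hasDerivAt_integral_oseenIntegrand _).comp t (hk t)).const_mul c
  have hφ' : HasDerivAt (fun t => c * (oseenIntegrand (k * t) * k))
      (c * (deriv oseenIntegrand (k * wake x) * k * k)) (wake x) :=
    ((((differentiable_oseenIntegrand _).hasDerivAt.comp _ (hk _)).mul_const k).const_mul c)
  have hexp : -(lam * wake x) / 2 = -(k * wake x) := by ring
  rw [hpot, laplacian3_comp hφ hφ'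
    ((eventually_ne_nhds hx).mono fun y hy => (hasFDerivAt_wake hy).differentiableAt)
    (fun j => (hasFDerivAt_fderiv_wake_apply hx j).differentiableAt),
    sum_sq_fderiv_wake_apply hx, laplacian3_wake hx, Phi0, wake_smul_of_nonneg hlam.le,
    hexp, ← oseenIntegrand_add_mul_deriv]
  simp only [c, k]
  field_simp
  ring

end
end

section
/- Let λ > 0 and η₀ > 0. Then there exists a constant C₄ = C₄(λ,η₀) > 0 such that for every η ∈ ℝ with |η| ≥ η₀, setting μ := (λ/2)² + iη, the square root w of −μ with positive imaginary part (i.e. w ∈ ℂ with w² = −μ and Im w > 0) satisfies Im w − λ/2 ≥ C₄ |η|^{1/2}. -/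
open MeasureTheory Real Set

noncomputable section

set_option maxHeartbeats 1000000 in
/-- **Lower bound on the imaginary part of `√(−μ)`:** for `λ > 0`, `η₀ > 0`, there is
`C₄ = C₄(λ,η₀) > 0` such that for all `η ∈ ℝ` with `|η| ≥ η₀` and `μ = (λ/2)² + iη`,
the square root `w` of `−μ` with positive imaginary part satisfies
`Im w − λ/2 ≥ C₄ |η|^(1/2)`. -/
theorem im_sqrt_neg_mu_lower_bound (lam η₀ : ℝ) (hlam : 0 < lam) (hη₀ : 0 < η₀) :
    ∃ C₄ > 0, ∀ η : ℝ, η₀ ≤ |η| →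
      ∀ w : ℂ, w ^ 2 = -(((lam / 2) ^ 2 : ℂ) + η * Complex.I) → 0 < w.im →
        C₄ * |η| ^ ((1:ℝ)/2) ≤ w.im - lam / 2 := by
  set s := Real.sqrt η₀ with hs
  have hspos : 0 < s := Real.sqrt_pos.mpr hη₀
  refine ⟨min (1/5) (s^3 / (6 * lam^3)), lt_min (by norm_num) (by positivity), ?_⟩
  intro η hη w hw hb
  set a := w.re with ha
  set b := w.im with hbdef
  -- extract real and imaginary parts of the equation
  have h1 : a^2 - b^2 = -((lam/2)^2) := by
    have := congrArg Complex.re hw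
    simpa [Complex.ext_iff, pow_two, Complex.mul_re, Complex.mul_im] using this
  have h2 : 2*a*b = -η := by
    have := congrArg Complex.im hw
    have h := this
    simp [pow_two, Complex.mul_re, Complex.mul_im] at h
    linarith
  have h3 : 4*a^2*b^2 = η^2 := by linear_combination (2*a*b - η) * h2
  have key : 4*b^4 - lam^2*b^2 = η^2 := by linear_combination h3 - 4*b^2*h1
  clear_value a b
  clear hw h1 h2 ha hbdef
  set t := Real.sqrt |η| with htdef
  have htpos : 0 < t := Real.sqrt_pos.mpr (lt_of_lt_of_le hη₀ hη)
  have ht2 : t^2 = |η| := Real.sq_sqrt (abs_nonneg η)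
  have ht4 : t^4 = η^2 := by rw [show t^4 = (t^2)^2 by ring, ht2, sq_abs]
  have hst : s ≤ t := Real.sqrt_le_sqrt hη
  rw [show |η| ^ ((1:ℝ)/2) = t from (Real.sqrt_eq_rpow |η|).symm]
  -- b > lam/2
  have hηne : η ≠ 0 := by
    intro h; rw [h, abs_zero] at hη; linarith
  have hη2pos : 0 < η^2 := by positivity
  have hblam : lam/2 < b := by
    by_contra h
    push_neg at h
    have hb2 : b^2 ≤ (lam/2)^2 := by nlinarith [hb]
    have : η^2 ≤ 0 := by
      nlinarith [key, mul_nonneg (sq_nonneg b) (by linarith : (0:ℝ) ≤ (lam/2)^2 - b^2)]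
    linarith
  rcases le_or_gt t lam with hcase | hcase
  · -- small η: use C = s^3/(6 lam^3)
    have hbl : b ≤ lam := by
      by_contra h
      push_neg at h
      have hb2 : lam^2 < b^2 := by nlinarith [hlam]
      have h6 : t^4 ≤ lam^4 := pow_le_pow_left₀ htpos.le hcase 4
      have h7 : (0:ℝ) < (b^2 - lam^2)*(4*b^2 + 3*lam^2) :=
        mul_pos (by linarith) (by positivity)
      nlinarith [key, ht4, h6, h7]
    have hCle : min (1/5) (s^3 / (6 * lam^3)) ≤ s^3 / (6 * lam^3) := min_le_right _ _
    have hgoal : s^3 / (6 * lam^3) * t ≤ b - lam/2 := by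
      rw [div_mul_eq_mul_div, div_le_iff₀ (by positivity)]
      -- s^3 * t ≤ (b - lam/2) * (6 lam^3)
      have hs3 : s^3 ≤ t^3 := pow_le_pow_left₀ hspos.le hst 3
      have hst4 : s^3 * t ≤ t^4 := by nlinarith [mul_le_mul_of_nonneg_right hs3 htpos.le]
      have e1 : b^2*(2*b-lam) ≤ lam^2*(2*b-lam) :=
        mul_le_mul_of_nonneg_right (by nlinarith [hbl, hb]) (by linarith)
      have e2 : (b^2*(2*b-lam))*(2*b+lam) ≤ (lam^2*(2*b-lam))*(3*lam) :=
        mul_le_mul e1 (by linarith) (by linarith)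
          (mul_nonneg (by positivity) (by linarith))
      have e0 : 4*b^4 - lam^2*b^2 = (b^2*(2*b-lam))*(2*b+lam) := by ring
      have e3 : (lam^2*(2*b-lam))*(3*lam) = (b - lam/2)*(6*lam^3) := by ring
      linarith [hst4, ht4, key, e0, e2, e3]
    calc min (1/5) (s^3 / (6 * lam^3)) * t ≤ s^3 / (6 * lam^3) * t :=
          mul_le_mul_of_nonneg_right hCle htpos.le
      _ ≤ b - lam/2 := hgoal
  · -- large η: use C = 1/5
    have h2b : t^2 ≤ 2*b^2 := by nlinarith [key, ht4, sq_nonneg (2*b^2 - t^2)]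
    have hb7 : 7*t ≤ 10*b := by nlinarith [h2b, htpos, hb, mul_pos htpos hb]
    have hCle : min (1/5) (s^3 / (6 * lam^3)) ≤ 1/5 := min_le_left _ _
    calc min (1/5) (s^3 / (6 * lam^3)) * t ≤ (1/5) * t :=
          mul_le_mul_of_nonneg_right hCle htpos.le
      _ ≤ b - lam/2 := by linarith [hb7, hcase]

end
end

section
/- Let A ∈ (0,3), B ∈ (0,∞) and α ∈ (0,∞). Then there exists a constant C = C(A,B,α) > 0 such that for all x ∈ ℝ³: ∫_{ℝ³} |x−y|^{−A} e^{−α|x−y|} (1+|y|)^{−B} dy ≤ C (1+|x|)^{−B}. -/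
/-!
Peetre's inequality `(1 + |y|)^(-B) ≤ (1 + |x - y|)^|B| (1 + |x|)^(-B)` moves the weight onto the
kernel, so after translating `y ↦ x - y` the integral is at most `(1 + |x|)^(-B)` times
`∫ |z|^(-A) e^(-α|z|) (1 + |z|)^|B| dz`. In polar coordinates this is
`∫₀^∞ r^(2-A) e^(-αr) (1 + r)^|B| dr`, finite because `A < 3` and `(1 + r)^|B| = O(e^(αr/2))`.
-/

open MeasureTheory Real Set

noncomputable section

lemma one_add_rpow_le_mul_exp {b c r : ℝ} (hb : 0 ≤ b) (hc : 0 < c) (hr : 0 ≤ r) :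
    (1 + r) ^ b ≤ (1 + b / c) ^ b * exp (c * r) := by
  set k := 1 + b / c
  have hk : 1 ≤ k := by have := div_nonneg hb hc.le; linarith
  have hk0 : 0 < k := by linarith
  have hlin : 1 + r ≤ k * exp (r / k) := by
    calc 1 + r ≤ k * (r / k + 1) := by field_simp; linarith
      _ ≤ k * exp (r / k) := by gcongr; exact add_one_le_exp _
  have hck : c * k = c + b := by simp only [k]; field_simp
  have hexp : r / k * b ≤ c * r := by
    rw [div_mul_eq_mul_div, div_le_iff₀ hk0, mul_right_comm, hck]
    nlinarith [mul_nonneg hc.le hr]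
  calc (1 + r) ^ b ≤ (k * exp (r / k)) ^ b := by gcongr
    _ = k ^ b * exp (r / k * b) := by rw [mul_rpow hk0.le (exp_pos _).le, exp_mul]
    _ ≤ k ^ b * exp (c * r) := by gcongr

section WeightedConvolution

variable {E : Type*} [NormedAddCommGroup E]

lemma one_add_norm_le_mul_one_add_norm (x y : E) : 1 + ‖x‖ ≤ (1 + ‖x - y‖) * (1 + ‖y‖) := by
  nlinarith [norm_le_norm_sub_add x y, mul_nonneg (norm_nonneg (x - y)) (norm_nonneg y)]

lemma one_add_norm_rpow_neg_le (x y : E) (s : ℝ) :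
    (1 + ‖y‖) ^ (-s) ≤ (1 + ‖x - y‖) ^ |s| * (1 + ‖x‖) ^ (-s) := by
  rcases le_or_gt 0 s with hs | hs
  · rw [abs_of_nonneg hs, rpow_neg (by positivity), rpow_neg (by positivity), ← div_eq_mul_inv,
      le_div_iff₀ (by positivity), inv_mul_le_iff₀ (by positivity), ← mul_rpow (by positivity)
      (by positivity)]
    gcongr
    exact (one_add_norm_le_mul_one_add_norm x y).trans_eq (mul_comm _ _)
  · rw [abs_of_neg hs, ← mul_rpow (by positivity) (by positivity)]
    gcongr
    · linarith
    · simpa [norm_sub_rev] using one_add_norm_le_mul_one_add_norm y x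

theorem integral_sub_mul_one_add_norm_rpow_neg_le [MeasurableSpace E] [BorelSpace E]
    (μ : Measure E) [μ.IsAddLeftInvariant] [μ.IsNegInvariant] {K : E → ℝ} {s : ℝ} (hK : ∀ z, 0 ≤ K z)
    (hKw : Integrable (fun z => K z * (1 + ‖z‖) ^ |s|) μ) (x : E) :
    ∫ y, K (x - y) * (1 + ‖y‖) ^ (-s) ∂μ ≤
      (∫ z, K z * (1 + ‖z‖) ^ |s| ∂μ) * (1 + ‖x‖) ^ (-s) := by
  calc ∫ y, K (x - y) * (1 + ‖y‖) ^ (-s) ∂μ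
      ≤ ∫ y, K (x - y) * (1 + ‖x - y‖) ^ |s| * (1 + ‖x‖) ^ (-s) ∂μ := by
        refine integral_mono_of_nonneg (.of_forall fun y => ?_)
          ((hKw.comp_sub_left x).mul_const _) (.of_forall fun y => ?_)
        · have := hK (x - y)
          positivity
        · dsimp only
          rw [mul_assoc]
          exact mul_le_mul_of_nonneg_left (one_add_norm_rpow_neg_le x y s) (hK _)
    _ = (∫ z, K z * (1 + ‖z‖) ^ |s| ∂μ) * (1 + ‖x‖) ^ (-s) := by
        rw [integral_mul_const, integral_sub_left_eq_self (fun z => K z * (1 + ‖z‖) ^ |s|) μ x]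

end WeightedConvolution

theorem integrable_norm_rpow_mul_exp_mul_one_add_norm_rpow {E : Type*} [NormedAddCommGroup E]
    [NormedSpace ℝ E] [FiniteDimensional ℝ E] [Nontrivial E] [MeasurableSpace E] [BorelSpace E]
    (μ : Measure E) [μ.IsAddHaarMeasure] {A α b : ℝ} (hA : A < Module.finrank ℝ E)
    (hα : 0 < α) (hb : 0 ≤ b) :
    Integrable (fun z : E => ‖z‖ ^ (-A) * exp (-α * ‖z‖) * (1 + ‖z‖) ^ b) μ := by
  set t := ((Module.finrank ℝ E - 1 : ℕ) : ℝ) - A with ht_def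
  have ht : -1 < t := by
    have : 1 ≤ Module.finrank ℝ E := Module.finrank_pos
    rw [ht_def, Nat.cast_sub this, Nat.cast_one]
    linarith
  set M := (1 + b / (α / 2)) ^ b
  rw [integrable_fun_norm_addHaar μ (f := fun r => r ^ (-A) * exp (-α * r) * (1 + r) ^ b)]
  refine ((integrableOn_rpow_mul_exp_neg_mul_rpow ht one_pos (half_pos hα)).const_mul M).mono'
    (by fun_prop) ?_
  filter_upwards [ae_restrict_mem measurableSet_Ioi] with r (hr : 0 < r)
  have hpow : r ^ (Module.finrank ℝ E - 1) * r ^ (-A) = r ^ t := by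
    rw [ht_def, sub_eq_add_neg, rpow_add hr, rpow_natCast]
  have hexp : exp (α / 2 * r) * exp (-α * r) = exp (-(α / 2) * r) := by
    rw [← exp_add]; congr 1; ring
  rw [smul_eq_mul, norm_of_nonneg (by positivity), rpow_one]
  calc r ^ (Module.finrank ℝ E - 1) * (r ^ (-A) * exp (-α * r) * (1 + r) ^ b)
      = r ^ t * (1 + r) ^ b * exp (-α * r) := by rw [← hpow]; ring
    _ ≤ r ^ t * (M * exp (α / 2 * r)) * exp (-α * r) := by
        gcongr
        exact one_add_rpow_le_mul_exp hb (half_pos hα) hr.le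
    _ = M * (r ^ t * exp (-(α / 2) * r)) := by rw [← hexp]; ring

theorem conv_exp_kernel_estimate_general (A B α : ℝ) (hA3 : A < 3) (hα : 0 < α) :
    ∃ C > 0, ∀ x : E3,
      (∫ y : E3, ‖x - y‖ ^ (-A) * Real.exp (-α * ‖x - y‖) * (1 + ‖y‖) ^ (-B)) ≤
        C * (1 + ‖x‖) ^ (-B) := by
  have hA : A < Module.finrank ℝ E3 := by simpa using hA3
  set I := ∫ z : E3, ‖z‖ ^ (-A) * exp (-α * ‖z‖) * (1 + ‖z‖) ^ |B|
  have hI : 0 ≤ I := integral_nonneg fun z => by positivity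
  refine ⟨I + 1, by linarith, fun x => ?_⟩
  calc _ ≤ I * (1 + ‖x‖) ^ (-B) :=
        integral_sub_mul_one_add_norm_rpow_neg_le volume
          (K := fun z => ‖z‖ ^ (-A) * exp (-α * ‖z‖)) (fun z => by positivity)
          (integrable_norm_rpow_mul_exp_mul_one_add_norm_rpow volume hA hα (abs_nonneg B)) x
    _ ≤ (I + 1) * (1 + ‖x‖) ^ (-B) := by gcongr; linarith

/-- **Convolution with an exponentially decaying kernel:** for `A ∈ (0,3)`, `B > 0`, `α > 0`,
`∫ |x−y|^{−A} e^{−α|x−y|} (1+|y|)^{−B} dy ≤ C (1+|x|)^{−B}`. -/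
theorem conv_exp_kernel_estimate (A B α : ℝ) (hA0 : 0 < A) (hA3 : A < 3)
    (hB : 0 < B) (hα : 0 < α) :
    ∃ C > 0, ∀ x : E3,
      (∫ y : E3, ‖x - y‖ ^ (-A) * Real.exp (-α * ‖x - y‖) * (1 + ‖y‖) ^ (-B)) ≤
        C * (1 + ‖x‖) ^ (-B) :=
  conv_exp_kernel_estimate_general A B α hA3 hα

end
end
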